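/- arXiv:2605.03220 — 2 statements merged into one kernel-verified Lean document; each statement's English description precedes it below -/
import Mathlib

section
/- Let f : ℝ² → ℝ be smooth and radially symmetric, i.e. f(x) = F(|x|) for some function F : [0,∞) → ℝ. For x ≠ 0 let ∂_r denote the radial derivative in polar coordinates, so that ∂_r f(x) = ⟨x/|x|, ∇f(x)⟩. Then for every integer k ≥ 0, the functions on ℝ² \ {0} given in polar coordinates by r^{-1}·∂_r^{2k+1} f and by ∂_r^{2k} f extend to smooth functions on all of ℝ². -/
open Real

noncomputable section

/-- The radial derivative `∂_r g(x) = ⟨x/|x|, ∇g(x)⟩` of a function on `ℝ²`. -/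
def radialDeriv (g : EuclideanSpace ℝ (Fin 2) → ℝ) : EuclideanSpace ℝ (Fin 2) → ℝ :=
  fun x => fderiv ℝ g x (‖x‖⁻¹ • x)

open RealInnerProductSpace

abbrev E2 := EuclideanSpace ℝ (Fin 2)

def e0 : E2 := EuclideanSpace.single 0 1

lemma norm_e0 : ‖e0‖ = 1 := by simp [e0]

lemma hasFDerivAt_norm2 {x : E2} (hx : x ≠ 0) :
    HasFDerivAt (fun y : E2 => ‖y‖) (‖x‖⁻¹ • innerSL ℝ x) x := by
  have h1 : HasFDerivAt (fun y : E2 => ‖y‖ ^ 2) (2 • innerSL ℝ x) x :=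
    (hasStrictFDerivAt_norm_sq x).hasFDerivAt
  have h2 : HasDerivAt Real.sqrt (1 / (2 * Real.sqrt (‖x‖ ^ 2))) (‖x‖ ^ 2) := by
    apply Real.hasDerivAt_sqrt
    have : ‖x‖ ≠ 0 := norm_ne_zero_iff.2 hx
    positivity
  have h3 := h2.comp_hasFDerivAt x h1
  have hx' : ‖x‖ ≠ 0 := norm_ne_zero_iff.2 hx
  have he : (fun y : E2 => Real.sqrt (‖y‖ ^ 2)) = fun y : E2 => ‖y‖ := by
    funext y; rw [Real.sqrt_sq (norm_nonneg y)]
  have h4 : HasFDerivAt (fun y : E2 => ‖y‖) ((1 / (2 * Real.sqrt (‖x‖ ^ 2))) • 2 • innerSL ℝ x) x := by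
    rw [← he]; exact h3
  suffices hs : (‖x‖⁻¹ • innerSL ℝ x) = ((1 / (2 * Real.sqrt (‖x‖ ^ 2))) • 2 • innerSL ℝ x) by
    rw [hs]; exact h4
  rw [Real.sqrt_sq (norm_nonneg x)]
  ext w
  rw [two_smul]
  simp only [ContinuousLinearMap.smul_apply, ContinuousLinearMap.add_apply, smul_eq_mul]
  field_simp
  ring

/-- The 1-dimensional profile of a function on `ℝ²`. -/
def radG (v : E2 → ℝ) : ℝ → ℝ := fun t => v (t • e0)

lemma radG_contDiff {v : E2 → ℝ} (hv : ContDiff ℝ (⊤ : ℕ∞) v) : ContDiff ℝ (⊤ : ℕ∞) (radG v) :=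
  hv.comp ((contDiff_id (𝕜 := ℝ) (E := ℝ)).smul contDiff_const)

lemma norm_smul_e0 (t : ℝ) : ‖t • e0‖ = |t| := by
  rw [norm_smul, norm_e0, mul_one, Real.norm_eq_abs]

lemma radG_eq {v : E2 → ℝ} (hrad : ∀ x, v x = v (‖x‖ • e0)) (x : E2) : v x = radG v ‖x‖ :=
  hrad x

/-- `radialDeriv` only depends on values away from the origin. -/
lemma radialDeriv_congr {u w : E2 → ℝ} {x : E2} (h : ∀ y : E2, y ≠ 0 → u y = w y) (hx : x ≠ 0) :
    radialDeriv u x = radialDeriv w x := by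
  have hev : u =ᶠ[nhds x] w := by
    filter_upwards [IsOpen.mem_nhds (isOpen_compl_singleton) hx] with y hy
    exact h y hy
  rw [radialDeriv, radialDeriv, hev.fderiv_eq]

/-- The sequence of profiles of the even radial derivatives, as functions of `r ^ 2`. -/
def Pseq (H : ℝ → ℝ) : ℕ → ℝ → ℝ
  | 0 => H
  | (k+1) => fun s => 2 * deriv (Pseq H k) s + 4 * s * deriv (deriv (Pseq H k)) s

lemma one_le_top' : (1 : WithTop ℕ∞) ≤ ((⊤ : ℕ∞) : WithTop ℕ∞) := by
  exact_mod_cast (le_top : (1 : ℕ∞) ≤ ⊤)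

lemma top_ne_zero' : ((⊤ : ℕ∞) : WithTop ℕ∞) ≠ 0 := by
  exact ne_of_gt (lt_of_lt_of_le zero_lt_one one_le_top')

lemma top_add_one_le' : ((⊤ : ℕ∞) : WithTop ℕ∞) + 1 ≤ ((⊤ : ℕ∞) : WithTop ℕ∞) := by
  exact_mod_cast (le_top : (⊤ : ℕ∞) + 1 ≤ ⊤)

lemma paramG'_smooth {H F : Type} [NormedAddCommGroup H] [NormedSpace ℝ H] [NormedAddCommGroup F]
    [NormedSpace ℝ F] (G : H → ℝ → F) (hG : ContDiff ℝ (⊤ : ℕ∞) (fun p : H × ℝ => G p.1 p.2)) :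
    ContDiff ℝ (⊤ : ℕ∞) (fun p : H × ℝ => fderiv ℝ (fun z => G z p.2) p.1) := by
  have h1 : ContDiff ℝ (⊤ : ℕ∞) (fun q : (H × ℝ) × H => G q.2 q.1.2) :=
    hG.comp (contDiff_snd.prodMk (contDiff_snd.comp contDiff_fst))
  exact ContDiff.fderiv (f := fun (p : H × ℝ) (z : H) => G z p.2) (g := fun p => p.1) h1
    contDiff_fst top_add_one_le'

lemma param_hasFDerivAt {H F : Type} [NormedAddCommGroup H] [NormedSpace ℝ H] [ProperSpace H] [NormedAddCommGroup F]
    [NormedSpace ℝ F] [CompleteSpace F] (G : H → ℝ → F)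
    (hG : ContDiff ℝ (⊤ : ℕ∞) (fun p : H × ℝ => G p.1 p.2)) (y0 : H) :
    HasFDerivAt (fun y => ∫ s in (0:ℝ)..1, G y s)
      (∫ s in (0:ℝ)..1, fderiv ℝ (fun z => G z s) y0) y0 := by
  have hGc : Continuous (fun p : H × ℝ => G p.1 p.2) := hG.continuous
  have hG'c : Continuous (fun p : H × ℝ => fderiv ℝ (fun z => G z p.2) p.1) :=
    (paramG'_smooth G hG).continuous
  obtain ⟨C, hC⟩ := ((isCompact_closedBall y0 1).prod isCompact_Icc :
    IsCompact (Metric.closedBall y0 1 ×ˢ Set.Icc (0:ℝ) 1)).exists_bound_of_continuousOn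
      hG'c.continuousOn
  have hsec : ∀ x : H, Continuous (fun s : ℝ => G x s) := fun x =>
    hGc.comp (continuous_const.prodMk continuous_id)
  have hsec' : ∀ x : H, Continuous (fun s : ℝ => fderiv ℝ (fun z => G z s) x) := fun x =>
    hG'c.comp (continuous_const.prodMk continuous_id)
  have hdiff : ∀ (s : ℝ) (x : H), HasFDerivAt (fun z => G z s) (fderiv ℝ (fun z => G z s) x) x :=
    fun s x => ((hG.comp (contDiff_id.prodMk contDiff_const)).differentiable top_ne_zero'
      x).hasFDerivAt
  refine intervalIntegral.hasFDerivAt_integral_of_dominated_of_fderiv_le (bound := fun _ => C)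
    (Metric.ball_mem_nhds y0 one_pos)
    (Filter.Eventually.of_forall fun x => (hsec x).aestronglyMeasurable)
    ((hsec y0).intervalIntegrable 0 1) (hsec' y0).aestronglyMeasurable ?_ intervalIntegrable_const
    (Filter.Eventually.of_forall fun s _ x _ => hdiff s x)
  refine Filter.Eventually.of_forall fun s hs x hx => hC (x, s) ⟨Metric.ball_subset_closedBall hx, ?_⟩
  rw [Set.uIoc_of_le zero_le_one] at hs
  exact Set.Ioc_subset_Icc_self hs

theorem param_contDiff {H : Type} [NormedAddCommGroup H] [NormedSpace ℝ H] [ProperSpace H] (n : ℕ) :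
    ∀ (F : Type) [NormedAddCommGroup F] [NormedSpace ℝ F] [CompleteSpace F] (G : H → ℝ → F),
      ContDiff ℝ (⊤ : ℕ∞) (fun p : H × ℝ => G p.1 p.2) →
        ContDiff ℝ n (fun y => ∫ s in (0:ℝ)..1, G y s) := by
  induction n with
  | zero =>
    intro F _ _ _ G hG
    exact contDiff_zero.2
      (Differentiable.continuous fun y => (param_hasFDerivAt G hG y).differentiableAt)
  | succ n ih =>
    intro F _ _ _ G hG
    have key : ContDiff ℝ ((n : WithTop ℕ∞) + 1) (fun y => ∫ s in (0:ℝ)..1, G y s) :=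
      contDiff_succ_iff_hasFDerivAt.2 ⟨fun y => ∫ s in (0:ℝ)..1, fderiv ℝ (fun z => G z s) y,
        ih (H →L[ℝ] F) (fun y s => fderiv ℝ (fun z => G z s) y) (paramG'_smooth G hG),
        fun y => param_hasFDerivAt G hG y⟩
    exact_mod_cast key

theorem param_contDiff_top {H F : Type} [NormedAddCommGroup H] [NormedSpace ℝ H] [ProperSpace H]
    [NormedAddCommGroup F] [NormedSpace ℝ F] [CompleteSpace F] (G : H → ℝ → F)
    (hG : ContDiff ℝ (⊤ : ℕ∞) (fun p : H × ℝ => G p.1 p.2)) :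
    ContDiff ℝ (⊤ : ℕ∞) (fun y => ∫ s in (0:ℝ)..1, G y s) :=
  contDiff_infty.2 fun n => param_contDiff n F G hG

/-- Directional derivative along `e0`. -/
def d1 (g : E2 → ℝ) : E2 → ℝ := fun z => fderiv ℝ g z e0

/-- The smooth extension of `r⁻¹ ∂_r g`. -/
def Dop (g : E2 → ℝ) : E2 → ℝ :=
  fun y => ∫ s in (0:ℝ)..1, d1 (d1 g) (y + ((s - 1) * ⟪e0, y⟫) • e0)

lemma inner_e0_self : ⟪e0, e0⟫ = 1 := by
  rw [real_inner_self_eq_norm_sq, norm_e0]; norm_num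

lemma d1_contDiff {g : E2 → ℝ} (hg : ContDiff ℝ (⊤ : ℕ∞) g) : ContDiff ℝ (⊤ : ℕ∞) (d1 g) :=
  (hg.fderiv_right top_add_one_le').clm_apply contDiff_const

lemma Dop_contDiff {g : E2 → ℝ} (hg : ContDiff ℝ (⊤ : ℕ∞) g) : ContDiff ℝ (⊤ : ℕ∞) (Dop g) := by
  have hmap : ContDiff ℝ (⊤ : ℕ∞) (fun p : E2 × ℝ => p.1 + ((p.2 - 1) * ⟪e0, p.1⟫) • e0) :=
    contDiff_fst.add (((contDiff_snd.sub contDiff_const).mul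
      (ContDiff.inner ℝ contDiff_const contDiff_fst)).smul contDiff_const)
  exact param_contDiff_top (F := ℝ)
    (fun y s => d1 (d1 g) (y + ((s - 1) * ⟪e0, y⟫) • e0))
    ((d1_contDiff (d1_contDiff hg)).comp hmap)

lemma norm_add_smul_e0 {p : E2} (hp : ⟪e0, p⟫ = 0) (t : ℝ) :
    ‖p + (-t) • e0‖ = ‖p + t • e0‖ := by
  have h1 : ‖p + (-t) • e0‖ ^ 2 = ‖p + t • e0‖ ^ 2 := by
    rw [norm_add_sq_real, norm_add_sq_real, inner_smul_right, inner_smul_right,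
      real_inner_comm e0 p, hp, norm_smul, norm_smul, norm_neg]
    ring
  exact (pow_left_inj₀ (norm_nonneg _) (norm_nonneg _) two_ne_zero).1 h1

lemma d1_zero_of_even {g : E2 → ℝ} (hg : ContDiff ℝ (⊤ : ℕ∞) g)
    (hrad : ∀ x, g x = g (‖x‖ • e0)) {p : E2} (hp : ⟪e0, p⟫ = 0) : d1 g p = 0 := by
  have hev : (fun t : ℝ => g (p + (-t) • e0)) = fun t => g (p + t • e0) := by
    funext t
    rw [hrad (p + (-t) • e0), hrad (p + t • e0), norm_add_smul_e0 hp t]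
  have hd : HasDerivAt (fun t : ℝ => g (p + t • e0)) (d1 g p) 0 := by
    have h1 : HasDerivAt (fun t : ℝ => p + t • e0) e0 0 := by
      simpa using ((hasDerivAt_id (0:ℝ)).smul_const e0).const_add p
    have h2 := ((hg.differentiable top_ne_zero') (p + (0:ℝ) • e0)).hasFDerivAt.comp_hasDerivAt
      (0:ℝ) h1
    simpa [d1, Function.comp_def] using h2
  have h3 : deriv (fun t : ℝ => g (p + (-t) • e0)) 0
      = -deriv (fun t : ℝ => g (p + t • e0)) (-0) :=
    deriv_comp_neg (f := fun t : ℝ => g (p + t • e0)) (x := 0)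
  rw [hev, neg_zero, hd.deriv] at h3
  linarith

lemma d1_eq_mul {g : E2 → ℝ} (hg : ContDiff ℝ (⊤ : ℕ∞) g)
    (hrad : ∀ x, g x = g (‖x‖ • e0)) (y : E2) : d1 g y = ⟪e0, y⟫ * Dop g y := by
  obtain ⟨a, ha⟩ : ∃ a, a = ⟪e0, y⟫ := ⟨_, rfl⟩
  obtain ⟨p, hpdef⟩ : ∃ p, p = y - a • e0 := ⟨_, rfl⟩
  have hp : ⟪e0, p⟫ = 0 := by
    rw [hpdef, inner_sub_right, inner_smul_right, inner_e0_self, ← ha]; ring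
  have hd1 : ContDiff ℝ (⊤ : ℕ∞) (d1 g) := d1_contDiff hg
  have hd2 : Continuous (d1 (d1 g)) := (d1_contDiff hd1).continuous
  have hderiv : ∀ t : ℝ, HasDerivAt (fun t => d1 g (p + t • e0)) (d1 (d1 g) (p + t • e0)) t := by
    intro t
    have h1 : HasDerivAt (fun t : ℝ => p + t • e0) e0 t := by
      simpa using ((hasDerivAt_id t).smul_const e0).const_add p
    exact ((hd1.differentiable top_ne_zero') (p + t • e0)).hasFDerivAt.comp_hasDerivAt t h1
  have hftc := intervalIntegral.integral_eq_sub_of_hasDerivAt (a := 0) (b := a)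
    (fun t _ => hderiv t)
    ((hd2.comp (continuous_const.add (continuous_id.smul continuous_const))).intervalIntegrable 0 a)
  have hcv := intervalIntegral.smul_integral_comp_mul_left (a := 0) (b := 1)
    (fun t => d1 (d1 g) (p + t • e0)) a
  rw [mul_zero, mul_one, hftc] at hcv
  have hpa : p + a • e0 = y := by rw [hpdef]; abel
  simp only [zero_smul, add_zero, hpa] at hcv
  rw [d1_zero_of_even hg hrad hp, sub_zero] at hcv
  have hint : ∀ s : ℝ, d1 (d1 g) (p + (a * s) • e0) = d1 (d1 g) (y + ((s - 1) * a) • e0) := by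
    intro s; rw [hpdef]; congr 1; module
  simp only [hint] at hcv
  simp only [Dop]
  rw [← ha, ← hcv, smul_eq_mul]

lemma hasFDerivAt_radial {g : E2 → ℝ} (hg : ContDiff ℝ (⊤ : ℕ∞) g)
    (hrad : ∀ x, g x = g (‖x‖ • e0)) {y : E2} (hy : y ≠ 0) :
    HasFDerivAt g (deriv (radG g) ‖y‖ • (‖y‖⁻¹ • innerSL ℝ y)) y := by
  have hh := radG_contDiff hg
  have h1 := ((hh.differentiable top_ne_zero') ‖y‖).hasDerivAt.comp_hasFDerivAt y
    (hasFDerivAt_norm2 hy)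
  exact h1.congr_of_eventuallyEq (Filter.Eventually.of_forall fun z => radG_eq hrad z)

lemma radialDeriv_eq_deriv {g : E2 → ℝ} (hg : ContDiff ℝ (⊤ : ℕ∞) g)
    (hrad : ∀ x, g x = g (‖x‖ • e0)) {y : E2} (hy : y ≠ 0) :
    radialDeriv g y = deriv (radG g) ‖y‖ := by
  have hy' : ‖y‖ ≠ 0 := norm_ne_zero_iff.2 hy
  rw [radialDeriv, (hasFDerivAt_radial hg hrad hy).fderiv]
  simp only [ContinuousLinearMap.smul_apply, smul_eq_mul, innerSL_apply_apply, inner_smul_right,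
    real_inner_self_eq_norm_sq]
  field_simp

lemma d1_eq_deriv {g : E2 → ℝ} (hg : ContDiff ℝ (⊤ : ℕ∞) g)
    (hrad : ∀ x, g x = g (‖x‖ • e0)) {y : E2} (hy : y ≠ 0) :
    d1 g y = deriv (radG g) ‖y‖ * (‖y‖⁻¹ * ⟪e0, y⟫) := by
  rw [d1, (hasFDerivAt_radial hg hrad hy).fderiv]
  simp only [ContinuousLinearMap.smul_apply, smul_eq_mul, innerSL_apply_apply]
  rw [real_inner_comm y e0]

lemma Dop_eq_of_inner_ne {g : E2 → ℝ} (hg : ContDiff ℝ (⊤ : ℕ∞) g)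
    (hrad : ∀ x, g x = g (‖x‖ • e0)) {y : E2} (hy : y ≠ 0) (hc : ⟪e0, y⟫ ≠ 0) :
    Dop g y = deriv (radG g) ‖y‖ * ‖y‖⁻¹ := by
  have h1 := d1_eq_mul hg hrad y
  rw [d1_eq_deriv hg hrad hy] at h1
  apply mul_left_cancel₀ hc
  rw [← h1]; ring

lemma Dop_eq_deriv {g : E2 → ℝ} (hg : ContDiff ℝ (⊤ : ℕ∞) g)
    (hrad : ∀ x, g x = g (‖x‖ • e0)) {y : E2} (hy : y ≠ 0) :
    Dop g y = deriv (radG g) ‖y‖ * ‖y‖⁻¹ := by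
  by_cases hc : ⟪e0, y⟫ = 0
  swap
  · exact Dop_eq_of_inner_ne hg hrad hy hc
  have hγ : Continuous (fun t : ℝ => y + t • e0) :=
    continuous_const.add (continuous_id.smul continuous_const)
  have hne : ∀ t : ℝ, t ≠ 0 → ⟪e0, y + t • e0⟫ ≠ 0 := by
    intro t ht
    rw [inner_add_right, hc, inner_smul_right, inner_e0_self]
    simpa using ht
  have hne' : ∀ t : ℝ, t ≠ 0 → y + t • e0 ≠ 0 := by
    intro t ht h0
    apply hne t ht
    rw [h0, inner_zero_right]
  have hcd : Continuous (deriv (radG g)) := (radG_contDiff hg).continuous_deriv one_le_top'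
  have T1 : Filter.Tendsto (fun t : ℝ => Dop g (y + t • e0)) (nhdsWithin 0 {0}ᶜ)
      (nhds (Dop g y)) := by
    have := ((Dop_contDiff hg).continuous.comp hγ).tendsto 0
    simp only [Function.comp_def, zero_smul, add_zero] at this
    exact this.mono_left nhdsWithin_le_nhds
  have T2 : Filter.Tendsto (fun t : ℝ => deriv (radG g) ‖y + t • e0‖ * ‖y + t • e0‖⁻¹)
      (nhdsWithin 0 {0}ᶜ) (nhds (deriv (radG g) ‖y‖ * ‖y‖⁻¹)) := by
    have hc2 : ContinuousAt (fun t : ℝ => deriv (radG g) ‖y + t • e0‖ * ‖y + t • e0‖⁻¹) 0 := by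
      apply ContinuousAt.mul
      · exact (hcd.comp (continuous_norm.comp hγ)).continuousAt
      · exact (continuous_norm.comp hγ).continuousAt.inv₀ (by simpa using hy)
    have := hc2.tendsto
    simp only [zero_smul, add_zero] at this
    exact this.mono_left nhdsWithin_le_nhds
  have hev : (fun t : ℝ => Dop g (y + t • e0)) =ᶠ[nhdsWithin 0 {0}ᶜ]
      (fun t => deriv (radG g) ‖y + t • e0‖ * ‖y + t • e0‖⁻¹) := by
    filter_upwards [self_mem_nhdsWithin] with t ht
    exact Dop_eq_of_inner_ne hg hrad (hne' t ht) (hne t ht)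
  exact tendsto_nhds_unique T1 (T2.congr' hev.symm)

lemma radialDeriv_eq_mul {g : E2 → ℝ} (hg : ContDiff ℝ (⊤ : ℕ∞) g)
    (hrad : ∀ x, g x = g (‖x‖ • e0)) {y : E2} (hy : y ≠ 0) :
    radialDeriv g y = ‖y‖ * Dop g y := by
  have hy' : ‖y‖ ≠ 0 := norm_ne_zero_iff.2 hy
  rw [radialDeriv_eq_deriv hg hrad hy, Dop_eq_deriv hg hrad hy, mul_left_comm,
    mul_inv_cancel₀ hy', mul_one]

lemma Dop_rad {g : E2 → ℝ} (hg : ContDiff ℝ (⊤ : ℕ∞) g)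
    (hrad : ∀ x, g x = g (‖x‖ • e0)) : ∀ x, Dop g x = Dop g (‖x‖ • e0) := by
  intro x
  by_cases hx : x = 0
  · subst hx; simp
  · have hx' : ‖x‖ • e0 ≠ 0 := by
      intro h
      have := congrArg norm h
      rw [norm_smul_e0, norm_zero, abs_norm] at this
      exact hx (norm_eq_zero.1 this)
    rw [Dop_eq_deriv hg hrad hx, Dop_eq_deriv hg hrad hx', norm_smul_e0, abs_norm]

lemma radialDeriv_norm_mul {v : E2 → ℝ} (hv : ContDiff ℝ (⊤ : ℕ∞) v)
    (hvrad : ∀ x, v x = v (‖x‖ • e0)) {x : E2} (hx : x ≠ 0) :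
    radialDeriv (fun y => ‖y‖ * v y) x = v x + ‖x‖ ^ 2 * Dop v x := by
  have hx' : ‖x‖ ≠ 0 := norm_ne_zero_iff.2 hx
  have hprod := (hasFDerivAt_norm2 hx).mul ((hv.differentiable top_ne_zero' x).hasFDerivAt)
  have hr : fderiv ℝ v x (‖x‖⁻¹ • x) = ‖x‖ * Dop v x := radialDeriv_eq_mul hv hvrad hx
  rw [radialDeriv, HasFDerivAt.fderiv (f := fun y : E2 => ‖y‖ * v y) hprod,
    ContinuousLinearMap.add_apply, ContinuousLinearMap.smul_apply,
    ContinuousLinearMap.smul_apply, hr]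
  simp only [ContinuousLinearMap.smul_apply, smul_eq_mul, innerSL_apply_apply, inner_smul_right,
    real_inner_self_eq_norm_sq]
  field_simp
  ring

/-- The smooth radial functions agreeing with the even radial derivatives. -/
def Wseq (f : E2 → ℝ) : ℕ → E2 → ℝ
  | 0 => f
  | (k+1) => fun y => Dop (Wseq f k) y + ‖y‖ ^ 2 * Dop (Dop (Wseq f k)) y

lemma Wseq_prop {f : E2 → ℝ} (hf : ContDiff ℝ (⊤ : ℕ∞) f) (hrad : ∀ x, f x = f (‖x‖ • e0))
    (k : ℕ) : ContDiff ℝ (⊤ : ℕ∞) (Wseq f k) ∧ ∀ x, Wseq f k x = Wseq f k (‖x‖ • e0) := by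
  induction k with
  | zero => exact ⟨hf, hrad⟩
  | succ k ih =>
    obtain ⟨h1, h2⟩ := ih
    have hD := Dop_contDiff h1
    have hDr := Dop_rad h1 h2
    have hDD := Dop_contDiff hD
    have hDDr := Dop_rad hD hDr
    refine ⟨hD.add ((contDiff_norm_sq ℝ).mul hDD), fun x => ?_⟩
    show Dop (Wseq f k) x + ‖x‖ ^ 2 * Dop (Dop (Wseq f k)) x
      = Dop (Wseq f k) (‖x‖ • e0) + ‖‖x‖ • e0‖ ^ 2 * Dop (Dop (Wseq f k)) (‖x‖ • e0)
    rw [hDr x, hDDr x, norm_smul_e0, abs_norm]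

/-- For a smooth radially symmetric function `f` on `ℝ²`, the functions `r⁻¹·∂_r^{2k+1} f`
and `∂_r^{2k} f`, a priori defined on `ℝ² ∖ {0}`, extend to smooth functions on all of `ℝ²`. -/
theorem radial_derivatives_extend_smoothly
    (f : EuclideanSpace ℝ (Fin 2) → ℝ) (hf : ContDiff ℝ (⊤ : ℕ∞) f)
    (F : ℝ → ℝ) (hrad : ∀ x : EuclideanSpace ℝ (Fin 2), f x = F ‖x‖)
    (k : ℕ) :
    (∃ u : EuclideanSpace ℝ (Fin 2) → ℝ, ContDiff ℝ (⊤ : ℕ∞) u ∧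
        ∀ x : EuclideanSpace ℝ (Fin 2), x ≠ 0 → u x = ‖x‖⁻¹ * radialDeriv^[2 * k + 1] f x)
    ∧ (∃ w : EuclideanSpace ℝ (Fin 2) → ℝ, ContDiff ℝ (⊤ : ℕ∞) w ∧
        ∀ x : EuclideanSpace ℝ (Fin 2), x ≠ 0 → w x = radialDeriv^[2 * k] f x) := by
  have hrad' : ∀ x : E2, f x = f (‖x‖ • e0) := by
    intro x
    rw [hrad x, hrad (‖x‖ • e0), norm_smul_e0, abs_of_nonneg (norm_nonneg x)]
  have hW := Wseq_prop hf hrad'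
  have hEven : ∀ k : ℕ, ∀ x : E2, x ≠ 0 → radialDeriv^[2*k] f x = Wseq f k x := by
    intro k
    induction k with
    | zero => intro x _; rfl
    | succ k ih =>
      intro x hx
      have ho : ∀ y : E2, y ≠ 0 → radialDeriv^[2*k+1] f y = ‖y‖ * Dop (Wseq f k) y := by
        intro y hy
        rw [Function.iterate_succ_apply', radialDeriv_congr (fun z hz => ih z hz) hy]
        exact radialDeriv_eq_mul (hW k).1 (hW k).2 hy
      rw [show 2*(k+1) = (2*k+1)+1 by ring, Function.iterate_succ_apply',
        radialDeriv_congr ho hx,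
        radialDeriv_norm_mul (Dop_contDiff (hW k).1) (Dop_rad (hW k).1 (hW k).2) hx]
      rfl
  have hOdd : ∀ k : ℕ, ∀ x : E2, x ≠ 0 → radialDeriv^[2*k+1] f x = ‖x‖ * Dop (Wseq f k) x := by
    intro k x hx
    rw [Function.iterate_succ_apply', radialDeriv_congr (fun y hy => hEven k y hy) hx]
    exact radialDeriv_eq_mul (hW k).1 (hW k).2 hx
  refine ⟨⟨Dop (Wseq f k), Dop_contDiff (hW k).1, fun x hx => ?_⟩,
    ⟨Wseq f k, (hW k).1, fun x hx => (hEven k x hx).symm⟩⟩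
  have hx' : ‖x‖ ≠ 0 := norm_ne_zero_iff.2 hx
  rw [hOdd k x hx, ← mul_assoc, inv_mul_cancel₀ hx', one_mul]
end
end

section
/- Let α, β, δ, D ≥ 0 and C₁, C₂, C₃ > 0, and let f : [0,∞) → [0,∞) be Lebesgue integrable and satisfy: (i) f(0) ≤ C₁·D; (ii) f(τ') ≤ C₂·( f(τ) + (1+τ)^{−β}·D ) for all τ' ≥ τ ≥ 0; (iii) ∫_τ^∞ f(τ') dτ' ≤ C₃·( R^{−α}(1+τ)^{δ}·D + R·( f(τ) + (1+τ)^{−β}·D ) ) for all R, τ with 1 ≤ R ≤ τ. Then for every η > 0 there exists a constant C > 0, depending only on α, β, η, C₁, C₂, C₃ (and not on δ or D), such that f(τ) ≤ C·(1+τ)^{−min(β, α+1) + δ + η}·D for all τ ≥ 0. -/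
/-!
If `f τ ≤ A (1 + τ) ^ (-e + δ) D`, apply the integrated estimate at `σ = τ / 2` with
`R = σ ^ (e / (α + 1))`, which balances its two terms to `(1 + σ) ^ (δ - α e / (α + 1)) D`.
Some `s ∈ (σ, τ]` has `f s ≤ σ⁻¹ ∫_σ^∞ f`, and the boundedness estimate carries this to `τ`,
improving the exponent `e` to `min β (1 + α e / (α + 1))`. Starting from `e = 0`, the gap
between `e` and `α + 1` shrinks by the factor `α / (α + 1)` at each step, so finitely many
steps reach `min β (α + 1) - η`. Each step changes the constant only through `α`, `C₂`,
`C₃`, which keeps it independent of `δ`, `D` and `f`.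
-/

open MeasureTheory Set

lemma exists_le_inv_mul_setIntegral_Ioi {f : ℝ → ℝ} {σ : ℝ} (hf : ∀ x, 0 ≤ f x)
    (hfi : IntegrableOn f (Ioi σ)) (hσ : 0 < σ) :
    ∃ s ∈ Ioc σ (2 * σ), f s ≤ σ⁻¹ * ∫ x in Ioi σ, f x := by
  have hvol : volume (Ioc σ (2 * σ)) = ENNReal.ofReal σ := by
    rw [Real.volume_Ioc]; ring_nf
  obtain ⟨s, hs, hfs⟩ := exists_le_setAverage (s := Ioc σ (2 * σ)) (by simp [hvol, hσ])
    (by simp [hvol]) (hfi.mono_set Ioc_subset_Ioi_self)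
  refine ⟨s, hs, hfs.trans ?_⟩
  rw [setAverage_eq, measureReal_def, hvol, ENNReal.toReal_ofReal hσ.le, smul_eq_mul]
  exact mul_le_mul_of_nonneg_left
    (setIntegral_mono_set hfi (.of_forall hf) Ioc_subset_Ioi_self.eventuallyLE) (by positivity)

lemma rpow_le_two_rpow_mul_rpow {a b x c : ℝ} (ha : 0 < a) (hab : a ≤ b) (hba : b ≤ 2 * a)
    (hc : 0 ≤ c) (hxc : -c ≤ x) : a ^ x ≤ 2 ^ c * b ^ x := by
  have hb : 0 < b := ha.trans_le hab
  rcases le_or_gt 0 x with hx | hx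
  · calc a ^ x ≤ b ^ x := by gcongr
      _ ≤ 2 ^ c * b ^ x := le_mul_of_one_le_left (by positivity) (Real.one_le_rpow one_le_two hc)
  · calc a ^ x = 2 ^ (-x) * (2 * a) ^ x := by
          rw [Real.mul_rpow zero_le_two ha.le, ← mul_assoc, ← Real.rpow_add two_pos]; simp
      _ ≤ 2 ^ c * b ^ x :=
          mul_le_mul (Real.rpow_le_rpow_of_exponent_le one_le_two (by linarith))
            (Real.rpow_le_rpow_of_nonpos hb hba hx.le) (by positivity) (by positivity)

lemma one_add_rpow_le_mul_one_add_rpow {τ T e e' δ : ℝ} (hτ : 0 ≤ τ) (hτT : τ ≤ T) (he : 0 ≤ e)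
    (he' : 0 ≤ e') : (1 + τ) ^ (-e + δ) ≤ (1 + T) ^ e' * (1 + τ) ^ (-e' + δ) := by
  have h1 : 1 ≤ 1 + τ := by linarith
  calc (1 + τ) ^ (-e + δ) ≤ (1 + τ) ^ δ := Real.rpow_le_rpow_of_exponent_le h1 (by linarith)
    _ = (1 + τ) ^ e' * (1 + τ) ^ (-e' + δ) := by
        rw [← Real.rpow_add (by linarith)]; ring_nf
    _ ≤ (1 + T) ^ e' * (1 + τ) ^ (-e' + δ) := by gcongr

structure EnergyBounds (α β C₁ C₂ C₃ δ D : ℝ) (f : ℝ → ℝ) : Prop where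
  delta_nonneg : 0 ≤ δ
  data_nonneg : 0 ≤ D
  nonneg : ∀ τ, 0 ≤ f τ
  integrableOn : IntegrableOn f (Ici 0)
  initial : f 0 ≤ C₁ * D
  boundedness : ∀ τ τ' : ℝ, 0 ≤ τ → τ ≤ τ' → f τ' ≤ C₂ * (f τ + (1 + τ) ^ (-β) * D)
  integrated : ∀ R τ : ℝ, 1 ≤ R → R ≤ τ →
    ∫ τ' in Ioi τ, f τ' ≤ C₃ * (R ^ (-α) * (1 + τ) ^ δ * D + R * (f τ + (1 + τ) ^ (-β) * D))

namespace EnergyBounds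

variable {α β C₁ C₂ C₃ δ D : ℝ} {f : ℝ → ℝ}

lemma le_mul_data (hf : EnergyBounds α β C₁ C₂ C₃ δ D f) (hC₂ : 0 ≤ C₂) {τ : ℝ} (hτ : 0 ≤ τ) :
    f τ ≤ C₂ * (C₁ + 1) * D := by
  have h := hf.boundedness 0 τ le_rfl hτ
  rw [add_zero, Real.one_rpow, one_mul] at h
  nlinarith [hf.initial]

/-- The choice `R = σ ^ (e / (α + 1))` in the integrated estimate balances its two terms. -/
lemma setIntegral_Ioi_le (hf : EnergyBounds α β C₁ C₂ C₃ δ D f) (hα : 0 ≤ α) (hC₃ : 0 ≤ C₃)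
    {e A σ : ℝ} (he : 0 ≤ e) (heβ : e ≤ β) (heα : e ≤ α + 1) (hσ : 1 ≤ σ)
    (hfσ : f σ ≤ A * (1 + σ) ^ (-e + δ) * D) :
    ∫ x in Ioi σ, f x ≤ C₃ * (2 ^ α + A + 1) * (1 + σ) ^ (δ - α / (α + 1) * e) * D := by
  set θ := e / (α + 1) with hθ
  have hθ0 : 0 ≤ θ := by positivity
  have hθ1 : θ ≤ 1 := div_le_one_of_le₀ heα (by linarith)
  have hσ0 : 0 < σ := by linarith
  have hσ1 : 1 ≤ 1 + σ := by linarith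
  have hD := hf.data_nonneg
  have hθα : θ * -α + δ = δ - α / (α + 1) * e := by rw [hθ]; ring
  have hθe : θ + (-e + δ) = δ - α / (α + 1) * e := by rw [hθ]; field_simp; ring
  have hRα : (σ ^ θ) ^ (-α) * (1 + σ) ^ δ ≤ 2 ^ α * (1 + σ) ^ (δ - α / (α + 1) * e) := by
    rw [← Real.rpow_mul hσ0.le]
    calc σ ^ (θ * -α) * (1 + σ) ^ δ ≤ 2 ^ α * (1 + σ) ^ (θ * -α) * (1 + σ) ^ δ := by
          gcongr
          exact rpow_le_two_rpow_mul_rpow hσ0 (by linarith) (by linarith) hα (by nlinarith)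
      _ = 2 ^ α * (1 + σ) ^ (δ - α / (α + 1) * e) := by
          rw [mul_assoc, ← Real.rpow_add (by linarith), hθα]
  have hR : σ ^ θ * (f σ + (1 + σ) ^ (-β) * D)
      ≤ (A + 1) * (1 + σ) ^ (δ - α / (α + 1) * e) * D := by
    have hβ : (1 + σ) ^ (-β) ≤ (1 + σ) ^ (-e + δ) :=
      Real.rpow_le_rpow_of_exponent_le hσ1 (by linarith [hf.delta_nonneg])
    calc σ ^ θ * (f σ + (1 + σ) ^ (-β) * D)
        ≤ (1 + σ) ^ θ * ((A + 1) * (1 + σ) ^ (-e + δ) * D) := by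
          gcongr
          · exact add_nonneg (hf.nonneg σ) (by positivity)
          · linarith
          · nlinarith
      _ = (A + 1) * (1 + σ) ^ (δ - α / (α + 1) * e) * D := by
          rw [← hθe, Real.rpow_add (by linarith) θ]; ring
  calc ∫ x in Ioi σ, f x
      ≤ C₃ * ((σ ^ θ) ^ (-α) * (1 + σ) ^ δ * D + σ ^ θ * (f σ + (1 + σ) ^ (-β) * D)) :=
        hf.integrated _ σ (Real.one_le_rpow hσ hθ0) (Real.rpow_le_self_of_one_le hσ hθ1)
    _ ≤ C₃ * (2 ^ α * (1 + σ) ^ (δ - α / (α + 1) * e) * D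
          + (A + 1) * (1 + σ) ^ (δ - α / (α + 1) * e) * D) := by gcongr
    _ = C₃ * (2 ^ α + A + 1) * (1 + σ) ^ (δ - α / (α + 1) * e) * D := by ring

lemma exists_le_of_one_le (hf : EnergyBounds α β C₁ C₂ C₃ δ D f) (hα : 0 ≤ α) (hC₃ : 0 ≤ C₃)
    {e A σ : ℝ} (he : 0 ≤ e) (heβ : e ≤ β) (heα : e ≤ α + 1) (hσ : 1 ≤ σ)
    (hfσ : f σ ≤ A * (1 + σ) ^ (-e + δ) * D) :
    ∃ s ∈ Ioc σ (2 * σ),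
      f s ≤ 2 * C₃ * (2 ^ α + A + 1) * (1 + σ) ^ (δ - α / (α + 1) * e - 1) * D := by
  have hσ0 : 0 < σ := by linarith
  obtain ⟨s, hs, hfs⟩ := exists_le_inv_mul_setIntegral_Ioi hf.nonneg
    (hf.integrableOn.mono_set (Ioi_subset_Ici hσ0.le)) hσ0
  have hI0 : 0 ≤ ∫ x in Ioi σ, f x := setIntegral_nonneg measurableSet_Ioi fun x _ ↦ hf.nonneg x
  have hinv : σ⁻¹ ≤ 2 * (1 + σ)⁻¹ := by
    rw [inv_le_iff_one_le_mul₀ hσ0]; field_simp; linarith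
  refine ⟨s, hs, ?_⟩
  calc f s ≤ σ⁻¹ * ∫ x in Ioi σ, f x := hfs
    _ ≤ 2 * (1 + σ)⁻¹ * (C₃ * (2 ^ α + A + 1) * (1 + σ) ^ (δ - α / (α + 1) * e) * D) := by
        gcongr
        exact hf.setIntegral_Ioi_le hα hC₃ he heβ heα hσ hfσ
    _ = 2 * C₃ * (2 ^ α + A + 1) * (1 + σ) ^ (δ - α / (α + 1) * e - 1) * D := by
        rw [Real.rpow_sub_one (by positivity)]; ring

lemma le_of_two_le (hf : EnergyBounds α β C₁ C₂ C₃ δ D f) (hα : 0 ≤ α) (hC₂ : 0 ≤ C₂)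
    (hC₃ : 0 ≤ C₃) {e e' A τ : ℝ} (he : 0 ≤ e) (heβ : e ≤ β) (heα : e ≤ α + 1) (he' : 0 ≤ e')
    (he'β : e' ≤ β) (he'e : e' ≤ 1 + α / (α + 1) * e) (hA : 0 ≤ A)
    (hfA : ∀ t, 0 ≤ t → f t ≤ A * (1 + t) ^ (-e + δ) * D) (hτ : 2 ≤ τ) :
    f τ ≤ C₂ * (2 * C₃ * (2 ^ α + A + 1) + 1) * 2 ^ e' * (1 + τ) ^ (-e' + δ) * D := by
  set σ := τ / 2 with hσ
  set B := 2 ^ α + A + 1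
  have hσ1 : 1 ≤ 1 + σ := by linarith
  have hD := hf.data_nonneg
  have hδ := hf.delta_nonneg
  obtain ⟨s, ⟨hσs, hsτ⟩, hfs⟩ :=
    hf.exists_le_of_one_le hα hC₃ he heβ heα (by linarith) (hfA σ (by linarith))
  have hfs' : f s ≤ 2 * C₃ * B * (1 + σ) ^ (-e' + δ) * D :=
    hfs.trans (by gcongr; linarith)
  have hβ : (1 + s) ^ (-β) ≤ (1 + σ) ^ (-e' + δ) :=
    calc (1 + s) ^ (-β) ≤ (1 + σ) ^ (-β) :=
          Real.rpow_le_rpow_of_nonpos (by positivity) (by linarith) (by linarith)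
      _ ≤ (1 + σ) ^ (-e' + δ) := Real.rpow_le_rpow_of_exponent_le hσ1 (by linarith)
  calc f τ ≤ C₂ * (f s + (1 + s) ^ (-β) * D) := hf.boundedness s τ (by linarith) (by linarith)
    _ ≤ C₂ * (2 * C₃ * B * (1 + σ) ^ (-e' + δ) * D + (1 + σ) ^ (-e' + δ) * D) := by gcongr
    _ = C₂ * (2 * C₃ * B + 1) * (1 + σ) ^ (-e' + δ) * D := by ring
    _ ≤ C₂ * (2 * C₃ * B + 1) * (2 ^ e' * (1 + τ) ^ (-e' + δ)) * D := by
        gcongr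
        exact rpow_le_two_rpow_mul_rpow (by positivity) (by linarith) (by linarith) he'
          (by linarith)
    _ = C₂ * (2 * C₃ * B + 1) * 2 ^ e' * (1 + τ) ^ (-e' + δ) * D := by ring

end EnergyBounds

def HasUniformDecay (α β C₁ C₂ C₃ e : ℝ) : Prop :=
  ∃ A > 0, ∀ δ D : ℝ, ∀ f : ℝ → ℝ, EnergyBounds α β C₁ C₂ C₃ δ D f →
    ∀ τ, 0 ≤ τ → f τ ≤ A * (1 + τ) ^ (-e + δ) * D

namespace HasUniformDecay

variable {α β C₁ C₂ C₃ : ℝ}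

lemma mono {e₁ e₂ : ℝ} (h : HasUniformDecay α β C₁ C₂ C₃ e₂) (he : e₁ ≤ e₂) :
    HasUniformDecay α β C₁ C₂ C₃ e₁ := by
  obtain ⟨A, hA, hfA⟩ := h
  refine ⟨A, hA, fun δ D f hf τ hτ ↦ (hfA δ D f hf τ hτ).trans ?_⟩
  have := hf.data_nonneg
  gcongr
  linarith

lemma zero (hC₁ : 0 ≤ C₁) (hC₂ : 0 < C₂) : HasUniformDecay α β C₁ C₂ C₃ 0 := by
  refine ⟨C₂ * (C₁ + 1), by positivity, fun δ D f hf τ hτ ↦ (hf.le_mul_data hC₂.le hτ).trans ?_⟩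
  rw [neg_zero, zero_add]
  exact mul_le_mul_of_nonneg_right (le_mul_of_one_le_right (by positivity)
    (Real.one_le_rpow (by linarith) hf.delta_nonneg)) hf.data_nonneg

lemma improve {e e' : ℝ} (h : HasUniformDecay α β C₁ C₂ C₃ e) (hα : 0 ≤ α) (hC₂ : 0 ≤ C₂)
    (hC₃ : 0 ≤ C₃) (he : 0 ≤ e) (heβ : e ≤ β) (heα : e ≤ α + 1) (he' : 0 ≤ e')
    (he'β : e' ≤ β) (he'e : e' ≤ 1 + α / (α + 1) * e) : HasUniformDecay α β C₁ C₂ C₃ e' := by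
  obtain ⟨A, hA, hfA⟩ := h
  refine ⟨max (A * 3 ^ e') (C₂ * (2 * C₃ * (2 ^ α + A + 1) + 1) * 2 ^ e'), by positivity,
    fun δ D f hf τ hτ ↦ ?_⟩
  have := hf.data_nonneg
  rcases le_or_gt τ 2 with hτ2 | hτ2
  · calc f τ ≤ A * (1 + τ) ^ (-e + δ) * D := hfA δ D f hf τ hτ
      _ ≤ A * (3 ^ e' * (1 + τ) ^ (-e' + δ)) * D := by
          gcongr
          exact (one_add_rpow_le_mul_one_add_rpow hτ hτ2 he he').trans_eq (by norm_num)
      _ ≤ _ := by rw [← mul_assoc]; gcongr; exact le_max_left _ _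
  · calc f τ ≤ C₂ * (2 * C₃ * (2 ^ α + A + 1) + 1) * 2 ^ e' * (1 + τ) ^ (-e' + δ) * D :=
          hf.le_of_two_le hα hC₂ hC₃ he heβ heα he' he'β he'e hA.le (hfA δ D f hf) hτ2.le
      _ ≤ _ := by gcongr; exact le_max_right _ _

end HasUniformDecay

section

variable {α β C₁ C₂ C₃ : ℝ}

lemma hasUniformDecay_min_iterate (hα : 0 ≤ α) (hβ : 0 ≤ β) (hC₁ : 0 ≤ C₁) (hC₂ : 0 < C₂)
    (hC₃ : 0 ≤ C₃) (n : ℕ) :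
    HasUniformDecay α β C₁ C₂ C₃ (min β ((α + 1) * (1 - (α / (α + 1)) ^ n))) := by
  set r := α / (α + 1) with hr
  have hr0 : 0 ≤ r := by positivity
  have hr1 : r ≤ 1 := div_le_one_of_le₀ (by linarith) (by linarith)
  have hu0 (n : ℕ) : 0 ≤ (α + 1) * (1 - r ^ n) :=
    mul_nonneg (by linarith) (sub_nonneg.2 (pow_le_one₀ hr0 hr1))
  have hu1 (n : ℕ) : (α + 1) * (1 - r ^ n) ≤ α + 1 :=
    mul_le_of_le_one_right (by linarith) (by linarith [pow_nonneg hr0 n])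
  induction n with
  | zero => simpa [hβ] using HasUniformDecay.zero hC₁ hC₂
  | succ n ih =>
    have hrec : (α + 1) * (1 - r ^ (n + 1)) = 1 + r * ((α + 1) * (1 - r ^ n)) := by
      have hαr : (α + 1) * r = α := by rw [hr]; field_simp
      linear_combination -hαr
    refine ih.improve hα hC₂.le hC₃ (le_min hβ (hu0 n)) (min_le_left _ _)
      ((min_le_right _ _).trans (hu1 n)) (le_min hβ (hu0 _)) (min_le_left _ _) ?_
    rw [hrec]
    rcases le_total β ((α + 1) * (1 - r ^ n)) with h | h
    · rw [min_eq_left h]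
      have : β ≤ α + 1 := h.trans (hu1 n)
      refine (min_le_left _ _).trans ?_
      rw [← sub_nonneg, show 1 + α / (α + 1) * β - β = (α + 1 - β) / (α + 1) by field_simp; ring]
      exact div_nonneg (by linarith) (by linarith)
    · rw [min_eq_right h]
      exact min_le_right _ _

lemma hasUniformDecay_min_sub (hα : 0 ≤ α) (hβ : 0 ≤ β) (hC₁ : 0 ≤ C₁) (hC₂ : 0 < C₂)
    (hC₃ : 0 ≤ C₃) {η : ℝ} (hη : 0 < η) :
    HasUniformDecay α β C₁ C₂ C₃ (min β (α + 1) - η) := by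
  have hα1 : 0 < α + 1 := by linarith
  obtain ⟨n, hn⟩ := exists_pow_lt_of_lt_one (div_pos hη hα1)
    ((div_lt_one hα1).2 (lt_add_one α))
  refine (hasUniformDecay_min_iterate hα hβ hC₁ hC₂ hC₃ n).mono (le_min ?_ ?_)
  · linarith [min_le_left β (α + 1)]
  · rw [lt_div_iff₀ hα1] at hn
    linarith [min_le_right β (α + 1)]

end

/-- Abstract interpolation lemma: a nonnegative integrable function on `[0,∞)` satisfying
an initial bound, an energy-boundedness bound, and an integrated (dyadic) bound with an
interpolation parameter `R`, decays at the rate `(1+τ)^{-min(β,α+1)+δ+η}`.  The constant in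
the conclusion depends only on `α`, `β`, `η` and the constants `C₁`, `C₂`, `C₃` in the
hypotheses (and not on `δ`, `D` or `f`). -/
theorem abstract_interpolation_lemma
    (α β : ℝ) (hα : 0 ≤ α) (hβ : 0 ≤ β)
    (C₁ C₂ C₃ : ℝ) (hC₁ : 0 < C₁) (hC₂ : 0 < C₂) (hC₃ : 0 < C₃)
    (η : ℝ) (hη : 0 < η) :
    ∃ C > (0:ℝ),
      ∀ δ D : ℝ, 0 ≤ δ → 0 ≤ D →
      ∀ f : ℝ → ℝ, (∀ τ, 0 ≤ f τ) → IntegrableOn f (Set.Ici (0:ℝ)) →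
        f 0 ≤ C₁ * D →
        (∀ τ τ' : ℝ, 0 ≤ τ → τ ≤ τ' → f τ' ≤ C₂ * (f τ + (1 + τ) ^ (-β) * D)) →
        (∀ R τ : ℝ, 1 ≤ R → R ≤ τ →
          (∫ τ' in Set.Ioi τ, f τ')
            ≤ C₃ * (R ^ (-α) * (1 + τ) ^ δ * D + R * (f τ + (1 + τ) ^ (-β) * D))) →
        ∀ τ : ℝ, 0 ≤ τ →
          f τ ≤ C * (1 + τ) ^ (-min β (α + 1) + δ + η) * D := by
  obtain ⟨C, hC, hdecay⟩ := hasUniformDecay_min_sub hα hβ hC₁.le hC₂ hC₃.le hη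
  refine ⟨C, hC, fun δ D hδ hD f hf hfi h0 hii hiii τ hτ ↦ ?_⟩
  rw [show -min β (α + 1) + δ + η = -(min β (α + 1) - η) + δ by ring]
  exact hdecay δ D f ⟨hδ, hD, hf, hfi, h0, hii, hiii⟩ τ hτ
end
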